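/- arXiv:1907.09161 — 8 statements merged into one kernel-verified Lean document; each statement's English description precedes it below -/
import Mathlib

section
/- If f : ℤ^n → ℝ ∪ {+∞} is L♮-convex and α is a positive integer, then the function g defined by g(y) = f(αy) is L♮-convex (provided g has nonempty effective domain). -/
/-- Componentwise rounded-up midpoint `⌈(x+y)/2⌉` of two integer vectors. -/
def ceilMid {n : ℕ} (x y : Fin n → ℤ) : Fin n → ℤ := fun i => Int.fdiv (x i + y i + 1) 2

/-- Componentwise rounded-down midpoint `⌊(x+y)/2⌋` of two integer vectors. -/
def floorMid {n : ℕ} (x y : Fin n → ℤ) : Fin n → ℤ := fun i => Int.fdiv (x i + y i) 2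

/-- A function `f : ℤⁿ → ℝ ∪ {+∞}` (encoded into `EReal`) with nonempty effective
domain is L♮-convex if it satisfies discrete midpoint convexity. -/
def IsLNatFn {n : ℕ} (f : (Fin n → ℤ) → EReal) : Prop :=
  (∃ x, f x ≠ ⊤) ∧ ∀ x y, f (ceilMid x y) + f (floorMid x y) ≤ f x + f y

namespace LNatAux

lemma fdiv2 (a : ℤ) : Int.fdiv a 2 = a / 2 := Int.fdiv_eq_ediv_of_nonneg a (by norm_num)
def jn {m : ℕ} (x y : Fin m → ℤ) : Fin m → ℤ := fun i => max (x i) (y i)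
def mt {m : ℕ} (x y : Fin m → ℤ) : Fin m → ℤ := fun i => min (x i) (y i)
def dist1 {m : ℕ} (x y : Fin m → ℤ) : ℕ := ∑ i, (x i - y i).natAbs


lemma ne_top_pair {a b c d : EReal} (h : a + b ≤ c + d) (ha : a ≠ ⊥) (hb : b ≠ ⊥)
    (hc : c ≠ ⊤) (hd : d ≠ ⊤) : a ≠ ⊤ ∧ b ≠ ⊤ := by
  constructor
  · intro hA
    rw [hA, EReal.top_add_of_ne_bot hb] at h
    exact absurd (top_le_iff.mp h) (EReal.add_lt_top hc hd).ne
  · intro hB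
    rw [hB, EReal.add_top_of_ne_bot ha] at h
    exact absurd (top_le_iff.mp h) (EReal.add_lt_top hc hd).ne

lemma pair_real {a b c d : EReal} {ra rb rc rd : ℝ} (ha : a = (ra : EReal)) (hb : b = rb)
    (hc : c = rc) (hd : d = rd) (h : a + b ≤ c + d) : ra + rb ≤ rc + rd := by
  rw [ha, hb, hc, hd] at h; exact_mod_cast h

lemma pair_ereal {a b c d : EReal} {ra rb rc rd : ℝ} (ha : a = (ra : EReal)) (hb : b = rb)
    (hc : c = rc) (hd : d = rd) (h : ra + rb ≤ rc + rd) : a + b ≤ c + d := by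
  rw [ha, hb, hc, hd]; exact_mod_cast h

section Submod
variable {m : ℕ} (F : (Fin m → ℤ) → EReal)

/-- Base case: if componentwise distance ≤ 1, midpoints are exactly join and meet. -/
lemma submod_base (hdmc : ∀ x y, F (ceilMid x y) + F (floorMid x y) ≤ F x + F y)
    (x y : Fin m → ℤ) (h : ∀ i, (x i - y i).natAbs ≤ 1) :
    F (jn x y) + F (mt x y) ≤ F x + F y := by
  have h1 : jn x y = ceilMid x y := by
    funext i; simp only [jn, ceilMid, fdiv2]; have := h i; omega
  have h2 : mt x y = floorMid x y := by
    funext i; simp only [mt, floorMid, fdiv2]; have := h i; omega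
  rw [h1, h2]; exact hdmc x y

/-- Main induction step, assuming some coordinate has `x j - y j ≥ 2`. -/
lemma submod_main (hbot : ∀ z, F z ≠ ⊥)
    (hdmc : ∀ x y, F (ceilMid x y) + F (floorMid x y) ≤ F x + F y) (N : ℕ)
    (IH : ∀ a b, dist1 a b ≤ N → F (jn a b) + F (mt a b) ≤ F a + F b)
    (x y : Fin m → ℤ) (hN : dist1 x y ≤ N + 1) (hj : ∃ j, 2 ≤ x j - y j) :
    F (jn x y) + F (mt x y) ≤ F x + F y := by
  obtain ⟨j, hj⟩ := hj
  by_cases hx : F x = ⊤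
  · have : F x + F y = ⊤ := by rw [hx]; exact EReal.top_add_of_ne_bot (hbot y)
    rw [this]; exact le_top
  by_cases hy : F y = ⊤
  · have : F x + F y = ⊤ := by rw [hy]; exact EReal.add_top_of_ne_bot (hbot x)
    rw [this]; exact le_top
  -- the auxiliary points
  set mp : Fin m → ℤ := ceilMid x y with hmp_def
  set mm : Fin m → ℤ := floorMid x y with hmm_def
  set z : Fin m → ℤ := jn mp y with hz_def
  set z2 : Fin m → ℤ := mt x mm with hz2_def
  set w : Fin m → ℤ := mt x z with hw_def
  set w2 : Fin m → ℤ := jn y z2 with hw2_def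
  -- measure facts
  have key : ∀ (p q : Fin m → ℤ), (∀ i, (p i - q i).natAbs ≤ (x i - y i).natAbs) →
      ((p j - q j).natAbs < (x j - y j).natAbs) → dist1 p q ≤ N := by
    intro p q hle hlt
    have : dist1 p q < dist1 x y := by
      apply Finset.sum_lt_sum (fun i _ => hle i) ⟨j, Finset.mem_univ j, hlt⟩
    omega
  have dmz : dist1 mp y ≤ N := by
    apply key <;> (intros; simp only [hmp_def, ceilMid, fdiv2]) <;> omega
  have dmm : dist1 x mm ≤ N := by
    apply key <;> (intros; simp only [hmm_def, floorMid, fdiv2]) <;> omega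
  have dxz : dist1 x z ≤ N := by
    apply key <;> (intros; simp only [hz_def, hmp_def, jn, ceilMid, fdiv2]) <;> omega
  have dyz2 : dist1 y z2 ≤ N := by
    apply key <;> (intros; simp only [hz2_def, hmm_def, mt, floorMid, fdiv2]) <;> omega
  have dww : dist1 w w2 ≤ N := by
    apply key <;>
      (intros; simp only [hw_def, hw2_def, hz_def, hz2_def, hmp_def, hmm_def,
        jn, mt, ceilMid, floorMid, fdiv2]) <;> omega
  -- identities
  have id1 : jn x z = jn x y := by
    funext i; simp only [jn, hz_def, hmp_def, jn, ceilMid, fdiv2]; omega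
  have id2 : mt y z2 = mt x y := by
    funext i; simp only [mt, hz2_def, hmm_def, mt, floorMid, fdiv2]; omega
  have id3 : jn w w2 = z := by
    funext i; simp only [jn, mt, hw_def, hw2_def, hz_def, hz2_def, hmp_def, hmm_def,
      ceilMid, floorMid, fdiv2]; omega
  have id4 : mt w w2 = z2 := by
    funext i; simp only [jn, mt, hw_def, hw2_def, hz_def, hz2_def, hmp_def, hmm_def,
      ceilMid, floorMid, fdiv2]; omega
  -- domain facts
  have I0 := hdmc x y
  obtain ⟨hmp, hmm⟩ := ne_top_pair I0 (hbot _) (hbot _) hx hy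
  have Ia := IH mp y dmz
  obtain ⟨hz, -⟩ := ne_top_pair Ia (hbot _) (hbot _) hmp hy
  have Ib := IH x mm dmm
  obtain ⟨-, hz2⟩ := ne_top_pair Ib (hbot _) (hbot _) hx hmm
  have I1 := IH x z dxz
  rw [id1] at I1
  obtain ⟨hu, hw⟩ := ne_top_pair I1 (hbot _) (hbot _) hx hz
  have I2 := IH y z2 dyz2
  rw [id2] at I2
  obtain ⟨hw2, hv⟩ := ne_top_pair I2 (hbot _) (hbot _) hy hz2
  have I3 := IH w w2 dww
  rw [id3, id4] at I3
  -- pass to the reals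
  have ex := (EReal.coe_toReal hx (hbot x)).symm
  have ey := (EReal.coe_toReal hy (hbot y)).symm
  have eu := (EReal.coe_toReal hu (hbot _)).symm
  have ev := (EReal.coe_toReal hv (hbot _)).symm
  have ez := (EReal.coe_toReal hz (hbot z)).symm
  have ez2 := (EReal.coe_toReal hz2 (hbot z2)).symm
  have ew := (EReal.coe_toReal hw (hbot w)).symm
  have ew2 := (EReal.coe_toReal hw2 (hbot w2)).symm
  have r1 := pair_real eu ew ex ez I1
  have r2 := pair_real ew2 ev ey ez2 I2
  have r3 := pair_real ez ez2 ew ew2 I3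
  exact pair_ereal eu ev ex ey (by linarith)


lemma dist1_comm' {m : ℕ} (x y : Fin m → ℤ) : dist1 x y = dist1 y x := by
  unfold dist1; apply Finset.sum_congr rfl; intro i _; omega

lemma submod_of_dmc (hbot : ∀ z, F z ≠ ⊥)
    (hdmc : ∀ x y, F (ceilMid x y) + F (floorMid x y) ≤ F x + F y) :
    ∀ x y, F (jn x y) + F (mt x y) ≤ F x + F y := by
  suffices h : ∀ N x y, dist1 x y ≤ N → F (jn x y) + F (mt x y) ≤ F x + F y by
    intro x y; exact h (dist1 x y) x y le_rfl
  intro N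
  induction N with
  | zero =>
    intro x y h0
    exact submod_base F hdmc x y (fun i => by
      have : (x i - y i).natAbs ≤ dist1 x y := Finset.single_le_sum
        (f := fun i => (x i - y i).natAbs) (fun i _ => Nat.zero_le _) (Finset.mem_univ i)
      omega)
  | succ N IH =>
    intro x y hN
    by_cases hb : ∀ i, (x i - y i).natAbs ≤ 1
    · exact submod_base F hdmc x y hb
    · push_neg at hb
      obtain ⟨j, hj⟩ := hb
      rcases le_or_gt (x j - y j) 0 with hle | hlt
      · -- then y j - x j ≥ 2 : apply symmetric version
        have h2 : dist1 y x ≤ N + 1 := by rw [← dist1_comm']; exact hN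
        have := submod_main F hbot hdmc N IH y x h2 ⟨j, by omega⟩
        have e1 : jn y x = jn x y := by funext i; simp only [jn]; omega
        have e2 : mt y x = mt x y := by funext i; simp only [mt]; omega
        rw [e1, e2] at this
        calc F (jn x y) + F (mt x y) ≤ F y + F x := this
          _ = F x + F y := add_comm _ _
      · exact submod_main F hbot hdmc N IH x y hN ⟨j, by omega⟩

end Submod



/-- termination measure for the `T₁`-iteration -/
def psi (D : ℤ) : ℕ := if 1 ≤ D then (2*D-2).toNat else if -1 ≤ D then 0 else (-2*D-1).toNat

def mes {m : ℕ} (x y : Fin m → ℤ) : ℕ := ∑ i, psi (x i - y i)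

lemma psi_step_le (a b : ℤ) :
    psi ((max a (b+1) - 1) - min a (b+1)) ≤ psi (a - b) := by
  simp only [psi]; split_ifs <;> omega

lemma psi_step_lt (a b : ℤ) (h : 2 ≤ (a - b).natAbs) :
    psi ((max a (b+1) - 1) - min a (b+1)) < psi (a - b) := by
  simp only [psi]; split_ifs <;> omega

section Conv
variable {m : ℕ} (F : (Fin m → ℤ) → EReal)

lemma dmc_of_submod_inv
    (hsub : ∀ x y, F (jn x y) + F (mt x y) ≤ F x + F y)
    (hinv : ∀ z, F (fun i => z i + 1) = F z) :
    ∀ x y, F (ceilMid x y) + F (floorMid x y) ≤ F x + F y := by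
  suffices h : ∀ N x y, mes x y ≤ N → F (ceilMid x y) + F (floorMid x y) ≤ F x + F y by
    intro x y; exact h (mes x y) x y le_rfl
  intro N
  induction N with
  | zero =>
    intro x y h0
    -- any pair has a step... for N = 0 all psi are 0, hence all diffs in [-1,1]
    have hb : ∀ i, (x i - y i).natAbs ≤ 1 := by
      intro i
      have : psi (x i - y i) ≤ mes x y := Finset.single_le_sum
        (f := fun i => psi (x i - y i)) (fun i _ => Nat.zero_le _) (Finset.mem_univ i)
      simp only [psi] at this; split_ifs at this <;> omega
    have h1 : ceilMid x y = jn x y := by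
      funext i; simp only [jn, ceilMid, fdiv2]; have := hb i; omega
    have h2 : floorMid x y = mt x y := by
      funext i; simp only [mt, floorMid, fdiv2]; have := hb i; omega
    rw [h1, h2]; exact hsub x y
  | succ N IH =>
    intro x y hN
    by_cases hb : ∀ i, (x i - y i).natAbs ≤ 1
    · have h1 : ceilMid x y = jn x y := by
        funext i; simp only [jn, ceilMid, fdiv2]; have := hb i; omega
      have h2 : floorMid x y = mt x y := by
        funext i; simp only [mt, floorMid, fdiv2]; have := hb i; omega
      rw [h1, h2]; exact hsub x y
    · push_neg at hb
      obtain ⟨j, hj⟩ := hb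
      set X : Fin m → ℤ := fun i => max (x i) (y i + 1) - 1 with hX
      set Y : Fin m → ℤ := fun i => min (x i) (y i + 1) with hY
      have hmes : mes X Y ≤ N := by
        have : mes X Y < mes x y := by
          apply Finset.sum_lt_sum (fun i _ => psi_step_le (x i) (y i))
            ⟨j, Finset.mem_univ j, psi_step_lt (x j) (y j) (by omega)⟩
        omega
      have hc : ceilMid X Y = ceilMid x y := by
        funext i; simp only [ceilMid, hX, hY, fdiv2]; omega
      have hf : floorMid X Y = floorMid x y := by
        funext i; simp only [floorMid, hX, hY, fdiv2]; omega
      have step := hsub x (fun i => y i + 1)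
      have e1 : F (fun i => y i + 1) = F y := hinv y
      have e2 : F (jn x (fun i => y i + 1)) = F X := by
        have : jn x (fun i => y i + 1) = (fun i => X i + 1) := by
          funext i; simp only [jn, hX]; omega
        rw [this, hinv X]
      have e3 : mt x (fun i => y i + 1) = Y := by funext i; simp only [mt, hY]
      rw [e1, e2, e3] at step
      calc F (ceilMid x y) + F (floorMid x y)
          = F (ceilMid X Y) + F (floorMid X Y) := by rw [hc, hf]
        _ ≤ F X + F Y := IH X Y hmes
        _ ≤ F x + F y := step
end Conv




/-- Homogenization: `lift f (z₀, z) = f (z - z₀ 𝟙)`. -/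
def lift (f : (Fin n → ℤ) → EReal) : (Fin (n+1) → ℤ) → EReal :=
  fun z => f (fun i => z i.succ - z 0)

lemma lift_ne_bot (f : (Fin n → ℤ) → EReal) (hbot : ∀ x, f x ≠ ⊥) :
    ∀ z, lift f z ≠ ⊥ := fun z => hbot _

lemma lift_inv (f : (Fin n → ℤ) → EReal) :
    ∀ z, lift f (fun i => z i + 1) = lift f z := by
  intro z; unfold lift; congr 1; funext i; simp

/-- lift preserves discrete midpoint convexity. -/
lemma lift_dmc (f : (Fin n → ℤ) → EReal)
    (hdmc : ∀ x y, f (ceilMid x y) + f (floorMid x y) ≤ f x + f y) :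
    ∀ Z W, lift f (ceilMid Z W) + lift f (floorMid Z W) ≤ lift f Z + lift f W := by
  intro Z W
  set x : Fin n → ℤ := fun i => Z i.succ - Z 0 with hx
  set y : Fin n → ℤ := fun i => W i.succ - W 0 with hy
  show f (fun i => ceilMid Z W i.succ - ceilMid Z W 0) +
      f (fun i => floorMid Z W i.succ - floorMid Z W 0) ≤ f x + f y
  rcases Int.even_or_odd (Z 0 + W 0) with he | ho
  · obtain ⟨t, ht⟩ := he
    have c1 : (fun i => ceilMid Z W i.succ - ceilMid Z W 0) = ceilMid x y := by
      funext i; simp only [ceilMid, fdiv2, hx, hy]; omega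
    have c2 : (fun i => floorMid Z W i.succ - floorMid Z W 0) = floorMid x y := by
      funext i; simp only [floorMid, fdiv2, hx, hy]; omega
    rw [c1, c2]; exact hdmc x y
  · obtain ⟨t, ht⟩ := ho
    have c1 : (fun i => ceilMid Z W i.succ - ceilMid Z W 0) = floorMid x y := by
      funext i; simp only [ceilMid, floorMid, fdiv2, hx, hy]; omega
    have c2 : (fun i => floorMid Z W i.succ - floorMid Z W 0) = ceilMid x y := by
      funext i; simp only [ceilMid, floorMid, fdiv2, hx, hy]; omega
    rw [c1, c2]
    calc f (floorMid x y) + f (ceilMid x y) = f (ceilMid x y) + f (floorMid x y) := add_comm _ _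
      _ ≤ f x + f y := hdmc x y

lemma mulmax (α a b : ℤ) (h : 0 ≤ α) : α * max a b = max (α*a) (α*b) := by
  rcases le_total a b with h' | h'
  · rw [max_eq_right h', max_eq_right (mul_le_mul_of_nonneg_left h' h)]
  · rw [max_eq_left h', max_eq_left (mul_le_mul_of_nonneg_left h' h)]

lemma mulmin (α a b : ℤ) (h : 0 ≤ α) : α * min a b = min (α*a) (α*b) := by
  rcases le_total a b with h' | h'
  · rw [min_eq_left h', min_eq_left (mul_le_mul_of_nonneg_left h' h)]
  · rw [min_eq_right h', min_eq_right (mul_le_mul_of_nonneg_left h' h)]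

/-- scaling preserves submodularity. -/
lemma submod_scale {m : ℕ} (F : (Fin m → ℤ) → EReal) (α : ℤ) (hα : 0 ≤ α)
    (hsub : ∀ x y, F (jn x y) + F (mt x y) ≤ F x + F y) :
    ∀ x y, F (fun i => α * jn x y i) + F (fun i => α * mt x y i) ≤
      F (fun i => α * x i) + F (fun i => α * y i) := by
  intro x y
  have h := hsub (fun i => α * x i) (fun i => α * y i)
  have e1 : jn (fun i => α * x i) (fun i => α * y i) = fun i => α * jn x y i := by
    funext i; simp only [jn]; exact (mulmax α _ _ hα).symm
  have e2 : mt (fun i => α * x i) (fun i => α * y i) = fun i => α * mt x y i := by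
    funext i; simp only [mt]; exact (mulmin α _ _ hα).symm
  rw [e1, e2] at h; exact h


end LNatAux

open LNatAux in
theorem lnat_fn_scaling {n : ℕ} (f : (Fin n → ℤ) → EReal)
    (hfbot : ∀ x, f x ≠ ⊥) (hf : IsLNatFn f) (α : ℤ) (hα : 0 < α)
    (hdom : ∃ y : Fin n → ℤ, f (fun i => α * y i) ≠ ⊤) :
    IsLNatFn (fun y => f (fun i => α * y i)) := by
  obtain ⟨-, hdmcf⟩ := hf
  refine ⟨hdom, ?_⟩
  set g : (Fin n → ℤ) → EReal := fun y => f (fun i => α * y i) with hg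
  show ∀ x y, g (ceilMid x y) + g (floorMid x y) ≤ g x + g y
  have hFl_dmc := lift_dmc f hdmcf
  have hFl_bot : ∀ z, lift f z ≠ ⊥ := fun z => hfbot _
  have hFl_sub := submod_of_dmc (lift f) hFl_bot hFl_dmc
  have hGsub0 := submod_scale (lift f) α hα.le hFl_sub
  have keyG : lift g = fun z => lift f (fun i => α * z i) := by
    funext z
    show f (fun i => α * (z i.succ - z 0)) = f (fun i => α * z i.succ - α * z 0)
    congr 1; funext i; ring
  have hGsub : ∀ a b, lift g (jn a b) + lift g (mt a b) ≤ lift g a + lift g b := by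
    intro a b; rw [keyG]; exact hGsub0 a b
  have hGdmc := dmc_of_submod_inv (lift g) hGsub (lift_inv g)
  intro x y
  set Z : Fin (n+1) → ℤ := Fin.cons 0 x with hZ
  set W : Fin (n+1) → ℤ := Fin.cons 0 y with hW
  have h := hGdmc Z W
  have ezx : lift g Z = g x := by
    show g (fun i => Z i.succ - Z 0) = g x
    congr 1; funext i; simp [hZ]
  have ezy : lift g W = g y := by
    show g (fun i => W i.succ - W 0) = g y
    congr 1; funext i; simp [hW]
  have eC : lift g (ceilMid Z W) = g (ceilMid x y) := by
    show g _ = g (ceilMid x y)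
    congr 1; funext i
    simp only [ceilMid, hZ, hW, Fin.cons_succ, Fin.cons_zero, fdiv2]
    omega
  have eF : lift g (floorMid Z W) = g (floorMid x y) := by
    show g _ = g (floorMid x y)
    congr 1; funext i
    simp only [floorMid, hZ, hW, Fin.cons_succ, Fin.cons_zero, fdiv2]
    omega
  rw [ezx, ezy, eC, eF] at h
  exact h
end

section
/- Let S₁ = {(0,0,0), (1,1,0)}, S₂ = {(0,0,0), (0,1,1)}, S₃ = {(0,0,0), (1,0,1)} in ℤ³. Each S_i is L♮-convex, but the Minkowski sum S₁ + S₂ + S₃ = {(0,0,0),(0,1,1),(1,1,0),(1,0,1),(2,1,1),(1,1,2),(1,2,1),(2,2,2)} contains (1,1,1) in its convex hull while (1,1,1) ∉ S₁ + S₂ + S₃. -/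
open Pointwise

/-- A nonempty set `S ⊆ ℤⁿ` is L♮-convex if it is closed under rounded midpoints. -/
def IsLNatSet {n : ℕ} (S : Set (Fin n → ℤ)) : Prop :=
  S.Nonempty ∧ ∀ x ∈ S, ∀ y ∈ S, ceilMid x y ∈ S ∧ floorMid x y ∈ S

/-- Embedding of integer vectors into real vectors. -/
def toReal3 (x : Fin 3 → ℤ) : Fin 3 → ℝ := fun i => (x i : ℝ)

lemma lnat1 : IsLNatSet ({![0,0,0], ![1,1,0]} : Set (Fin 3 → ℤ)) := by
  refine ⟨⟨![0,0,0], Or.inl rfl⟩, ?_⟩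
  rintro x (rfl|rfl) y (rfl|rfl) <;> constructor <;>
    simp only [Set.mem_insert_iff, Set.mem_singleton_iff] <;> decide

lemma lnat2 : IsLNatSet ({![0,0,0], ![0,1,1]} : Set (Fin 3 → ℤ)) := by
  refine ⟨⟨![0,0,0], Or.inl rfl⟩, ?_⟩
  rintro x (rfl|rfl) y (rfl|rfl) <;> constructor <;>
    simp only [Set.mem_insert_iff, Set.mem_singleton_iff] <;> decide

lemma lnat3 : IsLNatSet ({![0,0,0], ![1,0,1]} : Set (Fin 3 → ℤ)) := by
  refine ⟨⟨![0,0,0], Or.inl rfl⟩, ?_⟩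
  rintro x (rfl|rfl) y (rfl|rfl) <;> constructor <;>
    simp only [Set.mem_insert_iff, Set.mem_singleton_iff] <;> decide

lemma sumEq :
    ({![0,0,0], ![1,1,0]} : Set (Fin 3 → ℤ)) + {![0,0,0], ![0,1,1]} + {![0,0,0], ![1,0,1]} =
      {![0,0,0], ![0,1,1], ![1,1,0], ![1,0,1], ![2,1,1], ![1,1,2], ![1,2,1], ![2,2,2]} := by
  simp only [Set.insert_eq, Set.union_add, Set.add_union, Set.singleton_add_singleton,
    Set.union_assoc]
  ext x
  simp only [Set.mem_union, Set.mem_singleton_iff, Set.mem_insert_iff]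
  constructor <;> intro h <;>
    rcases h with h|h|h|h|h|h|h|h <;> subst h <;> decide

theorem three_lnat_minkowski_sum_hole :
    let S₁ : Set (Fin 3 → ℤ) := {![0,0,0], ![1,1,0]}
    let S₂ : Set (Fin 3 → ℤ) := {![0,0,0], ![0,1,1]}
    let S₃ : Set (Fin 3 → ℤ) := {![0,0,0], ![1,0,1]}
    IsLNatSet S₁ ∧ IsLNatSet S₂ ∧ IsLNatSet S₃ ∧
    S₁ + S₂ + S₃ =
      {![0,0,0], ![0,1,1], ![1,1,0], ![1,0,1], ![2,1,1], ![1,1,2], ![1,2,1], ![2,2,2]} ∧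
    toReal3 ![1,1,1] ∈ convexHull ℝ (toReal3 '' (S₁ + S₂ + S₃)) ∧
    ![1,1,1] ∉ S₁ + S₂ + S₃ := by
  intro S₁ S₂ S₃
  have hsum : S₁ + S₂ + S₃ =
      {![0,0,0], ![0,1,1], ![1,1,0], ![1,0,1], ![2,1,1], ![1,1,2], ![1,2,1], ![2,2,2]} := sumEq
  refine ⟨lnat1, lnat2, lnat3, hsum, ?_, ?_⟩
  · rw [hsum]
    have ha : toReal3 ![0,0,0] ∈ toReal3 ''
        ({![0,0,0], ![0,1,1], ![1,1,0], ![1,0,1], ![2,1,1], ![1,1,2], ![1,2,1], ![2,2,2]} :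
          Set (Fin 3 → ℤ)) := ⟨![0,0,0], by simp, rfl⟩
    have hb : toReal3 ![2,2,2] ∈ toReal3 ''
        ({![0,0,0], ![0,1,1], ![1,1,0], ![1,0,1], ![2,1,1], ![1,1,2], ![1,2,1], ![2,2,2]} :
          Set (Fin 3 → ℤ)) := ⟨![2,2,2], by simp, rfl⟩
    have h := (convex_convexHull ℝ _) (subset_convexHull ℝ _ ha) (subset_convexHull ℝ _ hb)
      (by norm_num : (0:ℝ) ≤ 1/2) (by norm_num : (0:ℝ) ≤ 1/2) (by norm_num)
    convert h using 1
    funext i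
    fin_cases i <;> simp [toReal3]
  · rw [hsum]
    intro h
    simp only [Set.mem_insert_iff, Set.mem_singleton_iff] at h
    rcases h with h|h|h|h|h|h|h|h <;> exact absurd h (by decide)
end

section
/- The sets S₁ = {(0,0,0), (1,1,0)} and S₂ = {(0,0,0), (0,1,1)} are L♮-convex, but their Minkowski sum S₁ + S₂ = {(0,0,0), (0,1,1), (1,1,0), (1,2,1)} is not L♮-convex: for x = (0,1,1) and y = (1,1,0) in S₁ + S₂, neither ⌈(x+y)/2⌉ = (1,1,1) nor ⌊(x+y)/2⌋ = (0,1,0) belongs to S₁ + S₂. -/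
open Pointwise

theorem lnat_minkowski_sum_not_lnat :
    let S₁ : Set (Fin 3 → ℤ) := {![0,0,0], ![1,1,0]}
    let S₂ : Set (Fin 3 → ℤ) := {![0,0,0], ![0,1,1]}
    IsLNatSet S₁ ∧ IsLNatSet S₂ ∧
    S₁ + S₂ = {![0,0,0], ![0,1,1], ![1,1,0], ![1,2,1]} ∧
    (![0,1,1] : Fin 3 → ℤ) ∈ S₁ + S₂ ∧ (![1,1,0] : Fin 3 → ℤ) ∈ S₁ + S₂ ∧
    ceilMid ![0,1,1] ![1,1,0] = ![1,1,1] ∧ floorMid ![0,1,1] ![1,1,0] = ![0,1,0] ∧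
    ![1,1,1] ∉ S₁ + S₂ ∧ ![0,1,0] ∉ S₁ + S₂ ∧
    ¬ IsLNatSet (S₁ + S₂) := by
  intro S₁ S₂
  have hsum : S₁ + S₂ = {![0,0,0], ![0,1,1], ![1,1,0], ![1,2,1]} := by
    ext z
    simp only [S₁, S₂, Set.mem_add, Set.mem_insert_iff, Set.mem_singleton_iff]
    constructor
    · rintro ⟨a, (rfl | rfl), b, (rfl | rfl), rfl⟩
      · left; decide
      · right; left; decide
      · right; right; left; decide
      · right; right; right; decide
    · rintro (rfl | rfl | rfl | rfl)
      · exact ⟨![0,0,0], Or.inl rfl, ![0,0,0], Or.inl rfl, by decide⟩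
      · exact ⟨![0,0,0], Or.inl rfl, ![0,1,1], Or.inr rfl, by decide⟩
      · exact ⟨![1,1,0], Or.inr rfl, ![0,0,0], Or.inl rfl, by decide⟩
      · exact ⟨![1,1,0], Or.inr rfl, ![0,1,1], Or.inr rfl, by decide⟩
  have h1 : IsLNatSet S₁ := by
    refine ⟨⟨![0,0,0], Or.inl rfl⟩, ?_⟩
    rintro x (rfl | rfl) y (rfl | rfl) <;>
      refine ⟨?_, ?_⟩ <;>
      simp only [S₁, Set.mem_insert_iff, Set.mem_singleton_iff] <;> decide
  have h2 : IsLNatSet S₂ := by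
    refine ⟨⟨![0,0,0], Or.inl rfl⟩, ?_⟩
    rintro x (rfl | rfl) y (rfl | rfl) <;>
      refine ⟨?_, ?_⟩ <;>
      simp only [S₂, Set.mem_insert_iff, Set.mem_singleton_iff] <;> decide
  have hm1 : (![0,1,1] : Fin 3 → ℤ) ∈ S₁ + S₂ := by
    rw [hsum]; right; left; rfl
  have hm2 : (![1,1,0] : Fin 3 → ℤ) ∈ S₁ + S₂ := by
    rw [hsum]; right; right; left; rfl
  have hn1 : (![1,1,1] : Fin 3 → ℤ) ∉ S₁ + S₂ := by
    rw [hsum]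
    simp only [Set.mem_insert_iff, Set.mem_singleton_iff]
    decide
  have hn2 : (![0,1,0] : Fin 3 → ℤ) ∉ S₁ + S₂ := by
    rw [hsum]
    simp only [Set.mem_insert_iff, Set.mem_singleton_iff]
    decide
  have hc : ceilMid ![0,1,1] ![1,1,0] = ![1,1,1] := by decide
  have hf : floorMid ![0,1,1] ![1,1,0] = ![0,1,0] := by decide
  refine ⟨h1, h2, hsum, hm1, hm2, hc, hf, hn1, hn2, ?_⟩
  rintro ⟨-, h⟩
  exact hn1 (hc ▸ (h _ hm1 _ hm2).1)
end

section
/- A nonempty set S ⊆ ℤ^n is L♮-convex (closed under rounded midpoints) if and only if it satisfies translation-submodularity: for all x, y ∈ S and all nonnegative integers μ, both (x − μ·1) ∨ y and x ∧ (y + μ·1) belong to S, where 1 = (1,…,1) and ∨, ∧ denote componentwise max and min. -/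
private lemma fdiv2 (a : ℤ) : Int.fdiv a 2 = a / 2 := Int.fdiv_eq_ediv_of_nonneg a (by norm_num)

section Aux

variable {n : ℕ} {S : Set (Fin n → ℤ)}

private lemma memfun (z w : Fin n → ℤ) (h : ∀ i, z i = w i) (hw : w ∈ S) : z ∈ S := by
  have hzw : z = w := funext h
  rwa [hzw]

/-- Midpoint closure implies closure under componentwise max and min
(induction on the ℓ∞ distance). -/
private lemma maxmin_mem (h : ∀ x ∈ S, ∀ y ∈ S, ceilMid x y ∈ S ∧ floorMid x y ∈ S) :
    ∀ D : ℕ, ∀ x ∈ S, ∀ y ∈ S, (∀ i, (x i - y i).natAbs ≤ D) →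
      (fun i => max (x i) (y i)) ∈ S ∧ (fun i => min (x i) (y i)) ∈ S := by
  intro D
  induction D using Nat.strong_induction_on with
  | _ D IH =>
  intro x hx y hy hD
  obtain ⟨hu, hv⟩ := h x hx y hy
  by_cases h1 : D ≤ 1
  · constructor
    · exact memfun _ _ (fun i => by
        have := hD i; simp only [ceilMid, fdiv2]; omega) hu
    · exact memfun _ _ (fun i => by
        have := hD i; simp only [floorMid, fdiv2]; omega) hv
  · push_neg at h1
    constructor
    · -- max, via u = ceilMid x y
      have hb1 : ∀ i, (x i - ceilMid x y i).natAbs ≤ D - 1 := fun i => by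
        have := hD i; simp only [ceilMid, fdiv2]; omega
      have hb2 : ∀ i, (y i - ceilMid x y i).natAbs ≤ D - 1 := fun i => by
        have := hD i; simp only [ceilMid, fdiv2]; omega
      have hxu := (IH (D - 1) (by omega) x hx _ hu hb1).1
      have hyu := (IH (D - 1) (by omega) y hy _ hu hb2).1
      have hb3 : ∀ i, (max (x i) (ceilMid x y i) - max (y i) (ceilMid x y i)).natAbs ≤ D - 1 :=
        fun i => by have := hD i; simp only [ceilMid, fdiv2]; omega
      have hfin := (IH (D - 1) (by omega) _ hxu _ hyu hb3).1
      exact memfun _ _ (fun i => by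
        have := hD i; simp only [ceilMid, fdiv2]; omega) hfin
    · -- min, via v = floorMid x y
      have hb1 : ∀ i, (x i - floorMid x y i).natAbs ≤ D - 1 := fun i => by
        have := hD i; simp only [floorMid, fdiv2]; omega
      have hb2 : ∀ i, (y i - floorMid x y i).natAbs ≤ D - 1 := fun i => by
        have := hD i; simp only [floorMid, fdiv2]; omega
      have hxv := (IH (D - 1) (by omega) x hx _ hv hb1).2
      have hyv := (IH (D - 1) (by omega) y hy _ hv hb2).2
      have hb3 : ∀ i, (min (x i) (floorMid x y i) - min (y i) (floorMid x y i)).natAbs ≤ D - 1 :=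
        fun i => by have := hD i; simp only [floorMid, fdiv2]; omega
      have hfin := (IH (D - 1) (by omega) _ hxv _ hyv hb3).2
      exact memfun _ _ (fun i => by
        have := hD i; simp only [floorMid, fdiv2]; omega) hfin

private lemma max_mem' (h : ∀ x ∈ S, ∀ y ∈ S, ceilMid x y ∈ S ∧ floorMid x y ∈ S)
    (x : Fin n → ℤ) (hx : x ∈ S) (y : Fin n → ℤ) (hy : y ∈ S) :
    (fun i => max (x i) (y i)) ∈ S :=
  (maxmin_mem h (Finset.univ.sup fun i => (x i - y i).natAbs) x hx y hy
    (fun i => Finset.le_sup (f := fun i => (x i - y i).natAbs) (Finset.mem_univ i))).1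

private lemma min_mem' (h : ∀ x ∈ S, ∀ y ∈ S, ceilMid x y ∈ S ∧ floorMid x y ∈ S)
    (x : Fin n → ℤ) (hx : x ∈ S) (y : Fin n → ℤ) (hy : y ∈ S) :
    (fun i => min (x i) (y i)) ∈ S :=
  (maxmin_mem h (Finset.univ.sup fun i => (x i - y i).natAbs) x hx y hy
    (fun i => Finset.le_sup (f := fun i => (x i - y i).natAbs) (Finset.mem_univ i))).2

/-- Midpoint closure implies `(x - 1) ∨ y ∈ S`. -/
private lemma dec_max_mem (h : ∀ x ∈ S, ∀ y ∈ S, ceilMid x y ∈ S ∧ floorMid x y ∈ S) :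
    ∀ D : ℕ, ∀ x ∈ S, ∀ y ∈ S, (∀ i, (x i - y i).natAbs ≤ D) →
      (fun i => max (x i - 1) (y i)) ∈ S := by
  intro D
  induction D using Nat.strong_induction_on with
  | _ D IH =>
  intro x hx y hy hD
  by_cases h1 : D ≤ 1
  · exact memfun _ y (fun i => by have := hD i; omega) hy
  · push_neg at h1
    have hv := (h x hx y hy).2
    have hb : ∀ i, (x i - floorMid x y i).natAbs ≤ D - 1 := fun i => by
      have := hD i; simp only [floorMid, fdiv2]; omega
    have ha := IH (D - 1) (by omega) x hx _ hv hb
    have hfin := max_mem' h _ ha y hy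
    exact memfun _ _ (fun i => by
      have := hD i; simp only [floorMid, fdiv2]; omega) hfin

/-- Midpoint closure implies `x ∧ (y + 1) ∈ S`. -/
private lemma inc_min_mem (h : ∀ x ∈ S, ∀ y ∈ S, ceilMid x y ∈ S ∧ floorMid x y ∈ S) :
    ∀ D : ℕ, ∀ x ∈ S, ∀ y ∈ S, (∀ i, (x i - y i).natAbs ≤ D) →
      (fun i => min (x i) (y i + 1)) ∈ S := by
  intro D
  induction D using Nat.strong_induction_on with
  | _ D IH =>
  intro x hx y hy hD
  by_cases h1 : D ≤ 1
  · exact memfun _ x (fun i => by have := hD i; omega) hx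
  · push_neg at h1
    have hu := (h x hx y hy).1
    have hb : ∀ i, (ceilMid x y i - y i).natAbs ≤ D - 1 := fun i => by
      have := hD i; simp only [ceilMid, fdiv2]; omega
    have hbmem := IH (D - 1) (by omega) _ hu y hy hb
    have hfin := min_mem' h x hx _ hbmem
    exact memfun _ _ (fun i => by
      have := hD i; simp only [ceilMid, fdiv2]; omega) hfin

private lemma dec_max_mem' (h : ∀ x ∈ S, ∀ y ∈ S, ceilMid x y ∈ S ∧ floorMid x y ∈ S)
    (x : Fin n → ℤ) (hx : x ∈ S) (y : Fin n → ℤ) (hy : y ∈ S) :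
    (fun i => max (x i - 1) (y i)) ∈ S :=
  dec_max_mem h (Finset.univ.sup fun i => (x i - y i).natAbs) x hx y hy
    (fun i => Finset.le_sup (f := fun i => (x i - y i).natAbs) (Finset.mem_univ i))

private lemma inc_min_mem' (h : ∀ x ∈ S, ∀ y ∈ S, ceilMid x y ∈ S ∧ floorMid x y ∈ S)
    (x : Fin n → ℤ) (hx : x ∈ S) (y : Fin n → ℤ) (hy : y ∈ S) :
    (fun i => min (x i) (y i + 1)) ∈ S :=
  inc_min_mem h (Finset.univ.sup fun i => (x i - y i).natAbs) x hx y hy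
    (fun i => Finset.le_sup (f := fun i => (x i - y i).natAbs) (Finset.mem_univ i))

/-- Midpoint closure implies translation-submodularity. -/
private lemma trans_submod (h : ∀ x ∈ S, ∀ y ∈ S, ceilMid x y ∈ S ∧ floorMid x y ∈ S) :
    ∀ μ : ℕ, ∀ x ∈ S, ∀ y ∈ S,
      (fun i => max (x i - (μ : ℤ)) (y i)) ∈ S ∧
      (fun i => min (x i) (y i + (μ : ℤ))) ∈ S := by
  intro μ
  induction μ with
  | zero =>
    intro x hx y hy
    constructor
    · exact memfun _ _ (fun i => by push_cast; omega) (max_mem' h x hx y hy)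
    · exact memfun _ _ (fun i => by push_cast; omega) (min_mem' h x hx y hy)
  | succ μ IH =>
    intro x hx y hy
    obtain ⟨hz, hw⟩ := IH x hx y hy
    constructor
    · have h1 := dec_max_mem' h _ hz y hy
      exact memfun _ _ (fun i => by push_cast; omega) h1
    · have h2 := inc_min_mem' h x hx _ hw
      exact memfun _ _ (fun i => by push_cast; omega) h2

/-- Translation-submodularity implies midpoint closure. -/
private lemma mid_mem
    (hP : ∀ x ∈ S, ∀ y ∈ S, ∀ μ : ℕ,
      (fun i => max (x i - (μ : ℤ)) (y i)) ∈ S ∧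
      (fun i => min (x i) (y i + (μ : ℤ))) ∈ S) :
    ∀ D : ℕ, ∀ x ∈ S, ∀ y ∈ S, (∀ i, (x i - y i).natAbs ≤ D) →
      ceilMid x y ∈ S ∧ floorMid x y ∈ S := by
  intro D
  induction D using Nat.strong_induction_on with
  | _ D IH =>
  intro x hx y hy hD
  by_cases h1 : D ≤ 1
  · obtain ⟨hmax, hmin⟩ := hP x hx y hy 0
    constructor
    · exact memfun _ _ (fun i => by
        have := hD i; simp only [ceilMid, fdiv2]; push_cast; omega) hmax
    · exact memfun _ _ (fun i => by
        have := hD i; simp only [floorMid, fdiv2]; push_cast; omega) hmin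
  · push_neg at h1
    set μ : ℕ := (D + 1) / 2 with hμ
    have hy' : (fun i => max (x i - (μ : ℤ)) (y i)) ∈ S := (hP x hx y hy μ).1
    have hx' : (fun i => min (x i) (y i + (μ : ℤ))) ∈ S := (hP x hx y hy μ).2
    have hxh : (fun i => max (max (x i - (μ : ℤ)) (y i) - (μ : ℤ))
        (min (x i) (y i + (μ : ℤ)))) ∈ S := (hP _ hy' _ hx' μ).1
    have hyh : (fun i => min (max (x i - (μ : ℤ)) (y i))
        (min (x i) (y i + (μ : ℤ)) + (μ : ℤ))) ∈ S := (hP _ hy' _ hx' μ).2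
    have hdist : ∀ i, ((max (max (x i - (μ : ℤ)) (y i) - (μ : ℤ)) (min (x i) (y i + (μ : ℤ))))
        - (min (max (x i - (μ : ℤ)) (y i)) (min (x i) (y i + (μ : ℤ)) + (μ : ℤ)))).natAbs
        ≤ D - 1 := fun i => by
      have := hD i; omega
    obtain ⟨hc, hf⟩ := IH (D - 1) (by omega) _ hxh _ hyh hdist
    constructor
    · refine memfun _ _ (fun i => ?_) hc
      have := hD i
      simp only [ceilMid, fdiv2]
      omega
    · refine memfun _ _ (fun i => ?_) hf
      have := hD i
      simp only [floorMid, fdiv2]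
      omega

end Aux

theorem lnat_iff_translation_submodular {n : ℕ} (S : Set (Fin n → ℤ))
    (hS : S.Nonempty) :
    IsLNatSet S ↔
      ∀ x ∈ S, ∀ y ∈ S, ∀ μ : ℕ,
        (fun i => max (x i - (μ : ℤ)) (y i)) ∈ S ∧
        (fun i => min (x i) (y i + (μ : ℤ))) ∈ S := by
  constructor
  · rintro ⟨-, h⟩ x hx y hy μ
    exact trans_submod h μ x hx y hy
  · intro hP
    refine ⟨hS, fun x hx y hy => ?_⟩
    exact mid_mem hP (Finset.univ.sup fun i => (x i - y i).natAbs) x hx y hy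
      (fun i => Finset.le_sup (f := fun i => (x i - y i).natAbs) (Finset.mem_univ i))
end

section
/- If f : ℤ^n → ℝ ∪ {+∞} is L♮-convex, then f is submodular: f(x) + f(y) ≥ f(x ∨ y) + f(x ∧ y) for all x, y ∈ ℤ^n, where ∨ and ∧ are componentwise max and min. -/
/-!
Induction on `N = ‖x - y‖∞`. For `N ≤ 1` the rounded midpoints `p = ⌈(x+y)/2⌉`,
`q = ⌊(x+y)/2⌋` are `x ∨ y` and `x ∧ y`, so this is midpoint convexity itself. For `N ≥ 2`
the pairs `(x, p)`, `(y, q)`, `(x ∨ p, y ∨ q)` and `(x ∧ p, y ∧ q)` are at distance at most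
`⌈N/2⌉ < N`, and submodularity on these four pairs adds up to
`f(x ∨ y) + f(x ∧ y) + f(m₁) + f(m₂) ≤ f(x) + f(y) + f(p) + f(q)` with
`m₁ = (x ∧ p) ∨ (y ∧ q)` and `m₂ = (x ∨ p) ∧ (y ∨ q)`. Since `m₁ + m₂ = x + y`, the midpoints
of `m₁, m₂` are again `p, q`, and midpoint convexity gives `f(p) + f(q) ≤ f(m₁) + f(m₂)`;
cancelling `f(p) + f(q)`, finite unless `f(x) + f(y) = +∞`, finishes the step.
-/

lemma EReal.le_of_add_le_add_right_of_le {a b c : EReal} (h : a + c ≤ b + c) (hcb : c ≤ b)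
    (hc : c ≠ ⊥) : a ≤ b := by
  rcases eq_or_ne b ⊤ with rfl | hb
  · exact le_top
  · have hc' : c ≠ ⊤ := ne_top_of_le_ne_top hb hcb
    lift c to ℝ using ⟨hc', hc⟩
    exact (EReal.addLECancellable_coe c).add_le_add_iff_right.mp h

section Midpoints

variable {n : ℕ} (x y : Fin n → ℤ)

lemma ceilMid_apply (i : Fin n) : ceilMid x y i = (x i + y i + 1) / 2 :=
  Int.fdiv_eq_ediv_of_nonneg _ zero_le_two

lemma floorMid_apply (i : Fin n) : floorMid x y i = (x i + y i) / 2 :=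
  Int.fdiv_eq_ediv_of_nonneg _ zero_le_two

variable {x y}

lemma ceilMid_eq_sup (h : ∀ i, (x i - y i).natAbs ≤ 1) : ceilMid x y = x ⊔ y := by
  ext i
  have := h i
  simp only [ceilMid_apply, Pi.sup_apply]
  omega

lemma floorMid_eq_inf (h : ∀ i, (x i - y i).natAbs ≤ 1) : floorMid x y = x ⊓ y := by
  ext i
  have := h i
  simp only [floorMid_apply, Pi.inf_apply]
  omega

lemma ceilMid_congr {x' y' : Fin n → ℤ} (h : ∀ i, x' i + y' i = x i + y i) :
    ceilMid x' y' = ceilMid x y := by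
  ext i
  simp only [ceilMid_apply, h]

lemma floorMid_congr {x' y' : Fin n → ℤ} (h : ∀ i, x' i + y' i = x i + y i) :
    floorMid x' y' = floorMid x y := by
  ext i
  simp only [floorMid_apply, h]

end Midpoints

section Submodularity

variable {n : ℕ} {f : (Fin n → ℤ) → EReal}

lemma sup_add_inf_le_of_midpoint {N : ℕ} (hfbot : ∀ x, f x ≠ ⊥)
    (hmid : ∀ x y, f (ceilMid x y) + f (floorMid x y) ≤ f x + f y)
    (hsub : ∀ u v : Fin n → ℤ, (∀ i, (u i - v i).natAbs ≤ (N + 1) / 2) →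
      f (u ⊔ v) + f (u ⊓ v) ≤ f u + f v)
    {x y : Fin n → ℤ} (hxy : ∀ i, (x i - y i).natAbs ≤ N) :
    f (x ⊔ y) + f (x ⊓ y) ≤ f x + f y := by
  set p := ceilMid x y
  set q := floorMid x y
  have hpq : ∀ i, p i = (x i + y i + 1) / 2 ∧ q i = (x i + y i) / 2 :=
    fun i => ⟨ceilMid_apply x y i, floorMid_apply x y i⟩
  have hx := hsub x p fun i => by have := hxy i; have := hpq i; omega
  have hy := hsub y q fun i => by have := hxy i; have := hpq i; omega
  have hsup := hsub (x ⊔ p) (y ⊔ q) fun i => by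
    have := hxy i; have := hpq i; simp only [Pi.sup_apply]; omega
  have hinf := hsub (x ⊓ p) (y ⊓ q) fun i => by
    have := hxy i; have := hpq i; simp only [Pi.inf_apply]; omega
  have hsup_sup : x ⊔ p ⊔ (y ⊔ q) = x ⊔ y := by
    ext i; have := hpq i; simp only [Pi.sup_apply]; omega
  have hinf_inf : x ⊓ p ⊓ (y ⊓ q) = x ⊓ y := by
    ext i; have := hpq i; simp only [Pi.inf_apply]; omega
  set m₁ := x ⊓ p ⊔ y ⊓ q
  set m₂ := (x ⊔ p) ⊓ (y ⊔ q)
  have hm : ∀ i, m₁ i + m₂ i = x i + y i := fun i => by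
    have := hpq i; simp only [m₁, m₂, Pi.sup_apply, Pi.inf_apply]; omega
  have hpq_le_m : f p + f q ≤ f m₁ + f m₂ := by
    simpa only [ceilMid_congr hm, floorMid_congr hm] using hmid m₁ m₂
  rw [hsup_sup] at hsup
  rw [hinf_inf] at hinf
  refine EReal.le_of_add_le_add_right_of_le ?_ (hmid x y)
    (EReal.add_ne_bot_iff.mpr ⟨hfbot p, hfbot q⟩)
  calc f (x ⊔ y) + f (x ⊓ y) + (f p + f q)
      ≤ f (x ⊔ y) + f (x ⊓ y) + (f m₁ + f m₂) := add_le_add_right hpq_le_m _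
    _ = (f (x ⊔ y) + f m₂) + (f m₁ + f (x ⊓ y)) := by abel
    _ ≤ (f (x ⊔ p) + f (y ⊔ q)) + (f (x ⊓ p) + f (y ⊓ q)) := add_le_add hsup hinf
    _ = (f (x ⊔ p) + f (x ⊓ p)) + (f (y ⊔ q) + f (y ⊓ q)) := by abel
    _ ≤ (f x + f p) + (f y + f q) := add_le_add hx hy
    _ = f x + f y + (f p + f q) := by abel

lemma sup_add_inf_le_of_natAbs_le (hfbot : ∀ x, f x ≠ ⊥)
    (hmid : ∀ x y, f (ceilMid x y) + f (floorMid x y) ≤ f x + f y) (N : ℕ) :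
    ∀ x y : Fin n → ℤ, (∀ i, (x i - y i).natAbs ≤ N) → f (x ⊔ y) + f (x ⊓ y) ≤ f x + f y := by
  induction N using Nat.strong_induction_on with
  | _ N ih =>
  intro x y hxy
  rcases le_or_gt N 1 with hN | hN
  · rw [← ceilMid_eq_sup fun i => (hxy i).trans hN, ← floorMid_eq_inf fun i => (hxy i).trans hN]
    exact hmid x y
  · exact sup_add_inf_le_of_midpoint hfbot hmid (ih _ (by omega)) hxy

end Submodularity

theorem lnat_fn_submodular {n : ℕ} (f : (Fin n → ℤ) → EReal)
    (hfbot : ∀ x, f x ≠ ⊥) (hf : IsLNatFn f) :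
    ∀ x y : Fin n → ℤ, f (x ⊔ y) + f (x ⊓ y) ≤ f x + f y := fun x y =>
  sup_add_inf_le_of_natAbs_le hfbot hf.2 _ x y fun i =>
    Finset.le_sup (f := fun i => (x i - y i).natAbs) (Finset.mem_univ i)
end

section
/- Let S = {(0,0,0), ±(1,1,0), ±(0,1,1), ±(1,0,1)} ⊆ ℤ³ and define f : ℤ³ → ℤ ∪ {+∞} by f(x) = (x₁+x₂+x₃)/2 for x ∈ S and f(x) = +∞ otherwise. The system of inequalities f(y) − f(0) ≥ ⟨p, y⟩ for all y ∈ S has the unique real solution p = (1/2, 1/2, 1/2); consequently, the subdifferential ∂f(0) = {(1/2,1/2,1/2)} contains no integer point. -/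
/-! The six nonzero points of `Sdom` come in antipodal pairs `±y`, and `f` is odd on them
(`x₁ + x₂ + x₃` is even there), so the two inequalities for `y` and `-y` force `⟨p, y⟩ = f(y)`.
The pairs `±(1,1,0), ±(0,1,1), ±(1,0,1)` thus give `pᵢ + pⱼ = 1` for all `i ≠ j`, whose only
solution is `p = (1/2, 1/2, 1/2)`, and conversely this `p` satisfies every inequality with equality. -/

def Sdom : Set (Fin 3 → ℤ) :=
  {![0,0,0], ![1,1,0], ![-1,-1,0], ![0,1,1], ![0,-1,-1], ![1,0,1], ![-1,0,-1]}

open Classical in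
noncomputable def fEx : (Fin 3 → ℤ) → WithTop ℤ :=
  fun x => if x ∈ Sdom then ((x 0 + x 1 + x 2) / 2 : ℤ) else ⊤

/-- The subdifferential of `fEx` at the origin: real vectors `p` with
`f(y) − f(0) ≥ ⟨p, y⟩` for all `y` (the inequality being trivial when `f(y) = +∞`). -/
def subdiffAtZero : Set (Fin 3 → ℝ) :=
  {p | ∀ y : Fin 3 → ℤ, ∀ zy z0 : ℤ, fEx y = (zy : WithTop ℤ) →
    fEx ![0,0,0] = (z0 : WithTop ℤ) →
    (∑ i, p i * (y i : ℝ)) ≤ (zy : ℝ) - (z0 : ℝ)}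

lemma neg_mem_Sdom {y : Fin 3 → ℤ} (hy : y ∈ Sdom) : -y ∈ Sdom := by
  simp only [Sdom, Set.mem_insert_iff, Set.mem_singleton_iff] at hy ⊢
  rcases hy with rfl | rfl | rfl | rfl | rfl | rfl | rfl <;> simp [← List.ofFn_inj]

lemma two_dvd_sum_of_mem_Sdom {y : Fin 3 → ℤ} (hy : y ∈ Sdom) : 2 ∣ y 0 + y 1 + y 2 := by
  simp only [Sdom, Set.mem_insert_iff, Set.mem_singleton_iff] at hy
  rcases hy with rfl | rfl | rfl | rfl | rfl | rfl | rfl <;> decide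

lemma fEx_eq_coe_iff {y : Fin 3 → ℤ} {z : ℤ} :
    fEx y = z ↔ y ∈ Sdom ∧ 2 * z = y 0 + y 1 + y 2 := by
  by_cases hy : y ∈ Sdom
  · have := two_dvd_sum_of_mem_Sdom hy
    simp only [fEx, hy, if_true, true_and, WithTop.coe_inj]
    omega
  · simp [fEx, hy]

lemma fEx_zero : fEx ![0,0,0] = ((0 : ℤ) : WithTop ℤ) := by
  simp [fEx, Sdom]

lemma mem_subdiffAtZero_iff {p : Fin 3 → ℝ} :
    p ∈ subdiffAtZero ↔ ∀ y ∈ Sdom, ∑ i, p i * (y i : ℝ) ≤ (y 0 + y 1 + y 2 : ℝ) / 2 := by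
  constructor
  · intro hp y hy
    obtain ⟨k, hk⟩ := two_dvd_sum_of_mem_Sdom hy
    have hyk : (y 0 + y 1 + y 2 : ℝ) / 2 = k := by
      rw [div_eq_iff two_ne_zero]; exact_mod_cast hk.trans (mul_comm _ _)
    simpa [hyk] using hp y k 0 (fEx_eq_coe_iff.2 ⟨hy, hk.symm⟩) fEx_zero
  · intro hp y zy z0 hzy hz0
    obtain ⟨hy, hzy⟩ := fEx_eq_coe_iff.1 hzy
    obtain rfl : z0 = 0 := by exact_mod_cast hz0.symm.trans fEx_zero
    have hzy' : (zy : ℝ) = (y 0 + y 1 + y 2 : ℝ) / 2 := by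
      rw [eq_div_iff two_ne_zero]; exact_mod_cast (mul_comm _ _).trans hzy
    simpa [hzy'] using hp y hy

lemma sum_mul_eq_of_mem_subdiffAtZero {p : Fin 3 → ℝ} (hp : p ∈ subdiffAtZero)
    {y : Fin 3 → ℤ} (hy : y ∈ Sdom) : ∑ i, p i * (y i : ℝ) = (y 0 + y 1 + y 2 : ℝ) / 2 := by
  have hle := mem_subdiffAtZero_iff.1 hp y hy
  have hge := mem_subdiffAtZero_iff.1 hp (-y) (neg_mem_Sdom hy)
  simp only [Pi.neg_apply, Int.cast_neg, mul_neg, Finset.sum_neg_distrib] at hge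
  linarith

theorem subdiffAtZero_eq : subdiffAtZero = {fun _ => (1/2 : ℝ)} := by
  ext p
  rw [Set.mem_singleton_iff]
  constructor
  · intro hp
    have h01 := sum_mul_eq_of_mem_subdiffAtZero hp (y := ![1,1,0]) (by simp [Sdom])
    have h12 := sum_mul_eq_of_mem_subdiffAtZero hp (y := ![0,1,1]) (by simp [Sdom])
    have h02 := sum_mul_eq_of_mem_subdiffAtZero hp (y := ![1,0,1]) (by simp [Sdom])
    simp only [Fin.sum_univ_three, Fin.isValue, Matrix.cons_val_zero, Matrix.cons_val_one,
      Matrix.cons_val, Int.cast_one, Int.cast_zero, mul_one, mul_zero, add_zero, zero_add,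
      add_self_div_two] at h01 h12 h02
    funext i
    fin_cases i <;> simp only [Fin.zero_eta, Fin.mk_one, Fin.reduceFinMk] <;> linarith
  · rintro rfl
    refine mem_subdiffAtZero_iff.2 fun y _ => le_of_eq ?_
    rw [Fin.sum_univ_three]
    ring

theorem subdifferential_no_integer_point :
    subdiffAtZero = {fun _ => (1/2 : ℝ)} ∧
    ¬ ∃ q : Fin 3 → ℤ, (fun i => (q i : ℝ)) ∈ subdiffAtZero := by
  refine ⟨subdiffAtZero_eq, ?_⟩
  rintro ⟨q, hq⟩
  rw [subdiffAtZero_eq, Set.mem_singleton_iff] at hq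
  have h : 2 * q 0 = 1 := by exact_mod_cast (by linarith [congrFun hq 0] : (2 * q 0 : ℝ) = 1)
  omega
end

section
/- If f : ℤ^n → ℝ is multimodular, then the function g defined by g(y₁, …, y_n) = f(y_n, …, y₂, y₁) (reversing the order of the variables) is multimodular. -/
/-- The set `F = {−e₁, e₁−e₂, …, e_{n−1}−e_n, e_n}` of multimodularity directions,
indexed by `k ∈ {0, 1, …, n}`. -/
def Fdirs (n : ℕ) : Set (Fin n → ℤ) :=
  {d | ∃ k : ℕ, k ≤ n ∧
    d = fun j : Fin n => (if (j : ℕ) + 1 = k then (1 : ℤ) else 0) - (if (j : ℕ) = k then 1 else 0)}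

/-- A finite-valued function `f : ℤⁿ → ℝ` is multimodular if
`f(z+d) + f(z+d′) ≥ f(z) + f(z+d+d′)` for all `z` and distinct `d, d′ ∈ F`. -/
def MultimodularReal {n : ℕ} (f : (Fin n → ℤ) → ℝ) : Prop :=
  ∀ z : Fin n → ℤ, ∀ d ∈ Fdirs n, ∀ d' ∈ Fdirs n, d ≠ d' →
    f z + f (z + d + d') ≤ f (z + d) + f (z + d')

/-- The `k`-th multimodularity direction. -/
def dir (n k : ℕ) : Fin n → ℤ :=
  fun j : Fin n => (if (j : ℕ) + 1 = k then (1 : ℤ) else 0) - (if (j : ℕ) = k then 1 else 0)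

lemma dir_mem {n k : ℕ} (hk : k ≤ n) : dir n k ∈ Fdirs n := ⟨k, hk, rfl⟩

lemma dir_rev {n k : ℕ} (hk : k ≤ n) (i : Fin n) :
    dir n k i.rev = -(dir n (n - k) i) := by
  have hi := i.isLt
  have h1 : (n - ((i:ℕ) + 1)) + 1 = k ↔ (i : ℕ) = n - k := by omega
  have h2 : (n - ((i:ℕ) + 1)) = k ↔ (i : ℕ) + 1 = n - k := by omega
  simp only [dir, Fin.val_rev]
  rw [if_congr h1 rfl rfl, if_congr h2 rfl rfl]
  ring

theorem multimodular_reverse {n : ℕ} (f : (Fin n → ℤ) → ℝ)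
    (hf : MultimodularReal f) :
    MultimodularReal (fun y => f (fun i => y i.rev)) := by
  intro z d hd d' hd' hne
  obtain ⟨k, hk, rfl⟩ := hd
  obtain ⟨k', hk', rfl⟩ := hd'
  set w : Fin n → ℤ := fun i => z i.rev with hw
  set D : Fin n → ℤ := dir n (n - k) with hD
  set D' : Fin n → ℤ := dir n (n - k') with hD'
  have hDD' : D ≠ D' := by
    intro h
    apply hne
    funext j
    have h1 := dir_rev hk j.rev
    have h2 := dir_rev hk' j.rev
    rw [Fin.rev_rev] at h1 h2
    show dir n k j = dir n k' j
    rw [h1, h2, ← hD, ← hD', h]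
  have key := hf (w - D - D') D (dir_mem (Nat.sub_le n k)) D' (dir_mem (Nat.sub_le n k')) hDD'
  have e1 : w - D - D' + D + D' = w := by ring
  have e2 : w - D - D' + D = w - D' := by ring
  have e3 : w - D - D' + D' = w - D := by ring
  rw [e1, e2, e3] at key
  have gd : (fun i : Fin n => (z + dir n k) i.rev) = w - D := by
    funext i
    simp only [Pi.add_apply, Pi.sub_apply, hw, hD]
    rw [dir_rev hk i]; ring
  have gd' : (fun i : Fin n => (z + dir n k') i.rev) = w - D' := by
    funext i
    simp only [Pi.add_apply, Pi.sub_apply, hw, hD']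
    rw [dir_rev hk' i]; ring
  have gdd : (fun i : Fin n => (z + dir n k + dir n k') i.rev) = w - D - D' := by
    funext i
    simp only [Pi.add_apply, Pi.sub_apply, hw, hD, hD']
    rw [dir_rev hk i, dir_rev hk' i]; ring
  show f (fun i => z i.rev) + f (fun i => (z + dir n k + dir n k') i.rev) ≤
      f (fun i => (z + dir n k) i.rev) + f (fun i => (z + dir n k') i.rev)
  rw [gd, gd', gdd]
  linarith [key]
end

section
/- The Minkowski sum of S = {(0,0,1), (1,1,0)} and the integer box B = {(0,0,0), (1,0,0)} in ℤ³ equals {(0,0,1), (1,1,0), (1,0,1), (2,1,0)}, and this sum is not discrete midpoint convex: for x = (0,0,1) and y = (2,1,0) one has ‖x − y‖_∞ = 2 but ⌈(x+y)/2⌉ = (1,1,1) and ⌊(x+y)/2⌋ = (1,0,0) are both outside S + B, while S itself is discrete midpoint convex. -/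
open Pointwise

/-- A nonempty set `T ⊆ ℤⁿ` is discrete midpoint convex: for `x, y ∈ T` with
`‖x − y‖_∞ ≥ 2`, both rounded midpoints belong to `T`. -/
def IsDMCSet {n : ℕ} (T : Set (Fin n → ℤ)) : Prop :=
  T.Nonempty ∧ ∀ x ∈ T, ∀ y ∈ T, (∃ i, 2 ≤ |x i - y i|) →
    ceilMid x y ∈ T ∧ floorMid x y ∈ T

theorem dmc_minkowski_box_not_dmc :
    let S : Set (Fin 3 → ℤ) := {![0,0,1], ![1,1,0]}
    let B : Set (Fin 3 → ℤ) := {![0,0,0], ![1,0,0]}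
    S + B = {![0,0,1], ![1,1,0], ![1,0,1], ![2,1,0]} ∧
    IsDMCSet S ∧
    (![0,0,1] : Fin 3 → ℤ) ∈ S + B ∧ (![2,1,0] : Fin 3 → ℤ) ∈ S + B ∧
    (∃ i, 2 ≤ |(![0,0,1] : Fin 3 → ℤ) i - (![2,1,0] : Fin 3 → ℤ) i|) ∧
    ceilMid ![0,0,1] ![2,1,0] = ![1,1,1] ∧ floorMid ![0,0,1] ![2,1,0] = ![1,0,0] ∧
    ![1,1,1] ∉ S + B ∧ ![1,0,0] ∉ S + B ∧
    ¬ IsDMCSet (S + B) := by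
  intro S B
  have hSB : S + B = {![0,0,1], ![1,1,0], ![1,0,1], ![2,1,0]} := by
    ext x
    simp only [Set.mem_add, Set.mem_insert_iff, Set.mem_singleton_iff, S, B]
    constructor
    · rintro ⟨a, (rfl | rfl), b, (rfl | rfl), rfl⟩ <;>
        simp [show (![0,0,1] : Fin 3 → ℤ) + ![0,0,0] = ![0,0,1] by decide,
          show (![0,0,1] : Fin 3 → ℤ) + ![1,0,0] = ![1,0,1] by decide,
          show (![1,1,0] : Fin 3 → ℤ) + ![0,0,0] = ![1,1,0] by decide,
          show (![1,1,0] : Fin 3 → ℤ) + ![1,0,0] = ![2,1,0] by decide]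
    · rintro (rfl | rfl | rfl | rfl)
      · exact ⟨![0,0,1], Or.inl rfl, ![0,0,0], Or.inl rfl, by decide⟩
      · exact ⟨![1,1,0], Or.inr rfl, ![0,0,0], Or.inl rfl, by decide⟩
      · exact ⟨![0,0,1], Or.inl rfl, ![1,0,0], Or.inr rfl, by decide⟩
      · exact ⟨![1,1,0], Or.inr rfl, ![1,0,0], Or.inr rfl, by decide⟩
  refine ⟨hSB, ?_, ?_, ?_, ?_, ?_, ?_, ?_, ?_, ?_⟩
  · refine ⟨⟨![0,0,1], Or.inl rfl⟩, ?_⟩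
    rintro x (rfl | rfl) y (rfl | rfl) ⟨i, hi⟩ <;> [skip; skip; skip; skip] <;>
      exact absurd hi (by fin_cases i <;> decide)
  · rw [hSB]; exact Or.inl rfl
  · rw [hSB]; exact Or.inr (Or.inr (Or.inr rfl))
  · exact ⟨0, by decide⟩
  · funext i; fin_cases i <;> decide
  · funext i; fin_cases i <;> decide
  · rw [hSB]; rintro (h | h | h | h) <;> exact absurd h (by decide)
  · rw [hSB]; rintro (h | h | h | h) <;> exact absurd h (by decide)
  · rw [hSB]
    rintro ⟨-, h⟩
    have := h ![0,0,1] (Or.inl rfl) ![2,1,0] (Or.inr (Or.inr (Or.inr rfl))) ⟨0, by decide⟩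
    have h1 : ceilMid ![0,0,1] ![2,1,0] = ![1,1,1] := by funext i; fin_cases i <;> decide
    have h2 : floorMid ![0,0,1] ![2,1,0] = ![1,0,0] := by funext i; fin_cases i <;> decide
    rw [h1, h2] at this
    rcases this.1 with h | h | h | h <;> exact absurd h (by decide)
end
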